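/- Let 1 ≤ m < n and let Λ ≤ SL(n,ℝ) be an adapted cocompact lattice. Then for all z, z' ∈ Z, the orbits J•[z] and J•[z'] in H⧸Λ are equal if and only if z'⁻¹·z ∈ Λ∩Z, and they are disjoint otherwise. In particular, for z ∈ Z with z ∉ Λ, the orbit J•[z] is disjoint from J•[e]. -/

import Mathlib

open Matrix
open scoped Pointwise

abbrev SLR (n : ℕ) : Type := Matrix.SpecialLinearGroup (Fin n) ℝ

instance (n : ℕ) : TopologicalSpace (SLR n) :=
  TopologicalSpace.induced (fun g => (g : Matrix (Fin n) (Fin n) ℝ)) inferInstance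

/-- The index identification `Fin m ⊕ Fin (n-m) ≃ Fin n`. -/
def finBlockEquiv {m n : ℕ} (h : m ≤ n) : Fin m ⊕ Fin (n - m) ≃ Fin n :=
  finSumFinEquiv.trans (finCongr (Nat.add_sub_cancel' h))

/-- Upper-left block embedding `SL(m,ℝ) →* SL(n,ℝ)`, `g ↦ diag(g, I_{n-m})`. -/
noncomputable def iotaJ {m n : ℕ} (h : m ≤ n) : SLR m →* SLR n where
  toFun g :=
    ⟨(Matrix.reindex (finBlockEquiv h) (finBlockEquiv h))
        (Matrix.fromBlocks (g : Matrix (Fin m) (Fin m) ℝ) 0 0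
          (1 : Matrix (Fin (n - m)) (Fin (n - m)) ℝ)), by
      simp [Matrix.det_fromBlocks_zero₂₁]⟩
  map_one' := by
    apply Subtype.ext
    simp [Matrix.fromBlocks_one]
  map_mul' g₁ g₂ := by
    apply Subtype.ext
    simp only [Matrix.SpecialLinearGroup.coe_mul, Matrix.reindex_apply]
    erw [Matrix.SpecialLinearGroup.coe_mul]
    rw [Matrix.submatrix_mul_equiv _ _ _ ((finBlockEquiv h).symm) _,
      Matrix.fromBlocks_multiply]
    simp

/-- Lower-right block embedding `SL(n-m,ℝ) →* SL(n,ℝ)`, `S ↦ diag(I_m, S)`. -/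
noncomputable def iotaZ {m n : ℕ} (h : m ≤ n) : SLR (n - m) →* SLR n where
  toFun S :=
    ⟨(Matrix.reindex (finBlockEquiv h) (finBlockEquiv h))
        (Matrix.fromBlocks (1 : Matrix (Fin m) (Fin m) ℝ) 0 0
          (S : Matrix (Fin (n - m)) (Fin (n - m)) ℝ)), by
      simp [Matrix.det_fromBlocks_zero₂₁]⟩
  map_one' := by
    apply Subtype.ext
    simp [Matrix.fromBlocks_one]
  map_mul' S₁ S₂ := by
    apply Subtype.ext
    simp only [Matrix.SpecialLinearGroup.coe_mul, Matrix.reindex_apply]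
    erw [Matrix.SpecialLinearGroup.coe_mul]
    rw [Matrix.submatrix_mul_equiv _ _ _ ((finBlockEquiv h).symm) _,
      Matrix.fromBlocks_multiply]
    simp

/-- `J ≤ SL(n,ℝ)`: image of the upper-left block embedding. -/
noncomputable def Jsub (m n : ℕ) (h : m ≤ n) : Subgroup (SLR n) := (iotaJ h).range

/-- `Z ≤ SL(n,ℝ)`: image of the lower-right block embedding. -/
noncomputable def Zsub (m n : ℕ) (h : m ≤ n) : Subgroup (SLR n) := (iotaZ h).range

/-- `D`: diagonal matrices with value `d₁` on the first `m` entries, `d₂` on the rest. -/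
def Dset (m n : ℕ) : Set (SLR n) :=
  { x | ∃ d₁ d₂ : ℝ, (x : Matrix (Fin n) (Fin n) ℝ) =
      Matrix.diagonal (fun i : Fin n => if (i : ℕ) < m then d₁ else d₂) }

/-- An adapted cocompact lattice in `SL(n,ℝ)`. -/
structure IsAdaptedLattice {m n : ℕ} (h : m ≤ n) (Λ : Subgroup (SLR n)) : Prop where
  discrete : DiscreteTopology ↥Λ
  cocompact : CompactSpace (SLR n ⧸ Λ)
  discreteJ : DiscreteTopology ↥(Λ ⊓ Jsub m n h)
  cocompactJ : CompactSpace (↥(Jsub m n h) ⧸ Λ.subgroupOf (Jsub m n h))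
  discreteZ : DiscreteTopology ↥(Λ ⊓ Zsub m n h)
  cocompactZ : CompactSpace (↥(Zsub m n h) ⧸ Λ.subgroupOf (Zsub m n h))
  interD : ((Λ : Set (SLR n)) ∩ Dset m n) = {1}
  interDJZ : ((Λ : Set (SLR n)) ∩ (Dset m n * (Jsub m n h : Set (SLR n)) * (Zsub m n h : Set (SLR n)))) =
      ((Λ ⊓ Jsub m n h : Subgroup (SLR n)) : Set (SLR n)) * ((Λ ⊓ Zsub m n h : Subgroup (SLR n)) : Set (SLR n))

/-- The orbit of the point `[z] = zΛ ∈ SL(n,ℝ)⧸Λ` under (left translation by) a set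
`S ⊆ SL(n,ℝ)`. -/
def orbitOf {n : ℕ} (Λ : Subgroup (SLR n)) (S : Set (SLR n)) (z : SLR n) :
    Set (SLR n ⧸ Λ) :=
  (fun j => ((QuotientGroup.mk (j * z)) : SLR n ⧸ Λ)) '' S

/-!
If `j z Λ = j' z' Λ` with `j, j' ∈ J` and `z, z' ∈ Z`, then, since `J` and `Z` commute,
`(j' z')⁻¹ (j z) = (j'⁻¹ j)(z'⁻¹ z)` lies in `Λ ∩ J Z ⊆ Λ ∩ D J Z = (Λ ∩ J)(Λ ∩ Z)`.
As `J ∩ Z = 1`, factorisations in `J Z` are unique, so `z'⁻¹ z ∈ Λ ∩ Z`. Conversely, if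
`z'⁻¹ z ∈ Λ` then `j z Λ = j z' Λ` for every `j`, so the two orbits coincide.
-/

section Group

variable {G : Type*} [Group G] {Λ J Z : Subgroup G}

theorem mem_of_mul_mem_of_inter_mul_subset (hJZ : Disjoint J Z)
    (hΛ : (Λ : Set G) ∩ (J * Z) ⊆ ((Λ ⊓ J : Subgroup G) : Set G) * (Λ ⊓ Z : Subgroup G))
    {j z : G} (hj : j ∈ J) (hz : z ∈ Z) (h : j * z ∈ Λ) : z ∈ Λ := by
  obtain ⟨a, ha, b, hb, hab⟩ := hΛ ⟨h, Set.mul_mem_mul hj hz⟩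
  have hunique := Subgroup.mul_injective_of_disjoint hJZ
    (a₁ := (⟨a, ha.2⟩, ⟨b, hb.2⟩)) (a₂ := (⟨j, hj⟩, ⟨z, hz⟩)) hab
  obtain rfl : b = z := congrArg (fun p : J × Z => (p.2 : G)) hunique
  exact hb.1

theorem inv_mul_mem_of_mk_mul_eq_mk_mul (hcomm : ∀ j ∈ J, ∀ z ∈ Z, Commute j z)
    (hJZ : Disjoint J Z)
    (hΛ : (Λ : Set G) ∩ (J * Z) ⊆ ((Λ ⊓ J : Subgroup G) : Set G) * (Λ ⊓ Z : Subgroup G))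
    {j j' z z' : G} (hj : j ∈ J) (hj' : j' ∈ J) (hz : z ∈ Z) (hz' : z' ∈ Z)
    (h : (QuotientGroup.mk (j * z) : G ⧸ Λ) = QuotientGroup.mk (j' * z')) :
    z'⁻¹ * z ∈ Λ := by
  have hmem : (j' * z')⁻¹ * (j * z) ∈ Λ := QuotientGroup.eq.1 h.symm
  have hsplit : (j' * z')⁻¹ * (j * z) = (j'⁻¹ * j) * (z'⁻¹ * z) := by
    rw [_root_.mul_inv_rev, mul_assoc, ← mul_assoc j'⁻¹, ← mul_assoc z'⁻¹,
      ← (hcomm _ (mul_mem (inv_mem hj') hj) _ (inv_mem hz')).eq]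
    simp only [mul_assoc]
  rw [hsplit] at hmem
  exact mem_of_mul_mem_of_inter_mul_subset hJZ hΛ (mul_mem (inv_mem hj') hj)
    (mul_mem (inv_mem hz') hz) hmem

end Group

section Blocks

variable {m n : ℕ} (h : m ≤ n)

theorem coe_iotaJ (g : SLR m) :
    ((iotaJ h g : SLR n) : Matrix (Fin n) (Fin n) ℝ) =
      reindex (finBlockEquiv h) (finBlockEquiv h) (fromBlocks (g : Matrix (Fin m) (Fin m) ℝ) 0 0 1) :=
  rfl

theorem coe_iotaZ (S : SLR (n - m)) :
    ((iotaZ h S : SLR n) : Matrix (Fin n) (Fin n) ℝ) =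
      reindex (finBlockEquiv h) (finBlockEquiv h)
        (fromBlocks 1 0 0 (S : Matrix (Fin (n - m)) (Fin (n - m)) ℝ)) :=
  rfl

theorem coe_iotaJ_mul_coe_iotaZ (g : SLR m) (S : SLR (n - m)) :
    ((iotaJ h g : SLR n) : Matrix (Fin n) (Fin n) ℝ) * (iotaZ h S : SLR n) =
      ((iotaZ h S : SLR n) : Matrix (Fin n) (Fin n) ℝ) * (iotaJ h g : SLR n) := by
  simp only [coe_iotaJ, coe_iotaZ, reindex_apply,
    submatrix_mul_equiv _ _ _ (finBlockEquiv h).symm _, fromBlocks_multiply]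
  simp

theorem commute_of_mem_Jsub_of_mem_Zsub :
    ∀ j ∈ Jsub m n h, ∀ z ∈ Zsub m n h, Commute j z := by
  rintro _ ⟨g, rfl⟩ _ ⟨S, rfl⟩
  exact Subtype.ext (coe_iotaJ_mul_coe_iotaZ h g S)

theorem disjoint_Jsub_Zsub : Disjoint (Jsub m n h) (Zsub m n h) := by
  rw [Subgroup.disjoint_def]
  rintro _ ⟨g, rfl⟩ ⟨S, hS⟩
  have hblocks := (reindex (finBlockEquiv h) (finBlockEquiv h)).injective
    (congrArg Subtype.val hS)
  have hg : g = 1 := Subtype.ext <| by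
    simpa using (congrArg toBlocks₁₁ hblocks).symm
  rw [hg, map_one]

theorem one_mem_Dset : (1 : SLR n) ∈ Dset m n :=
  ⟨1, 1, by simp⟩

end Blocks

theorem IsAdaptedLattice.inter_mul_subset {m n : ℕ} {h : m ≤ n} {Λ : Subgroup (SLR n)}
    (hΛ : IsAdaptedLattice h Λ) :
    (Λ : Set (SLR n)) ∩ (Jsub m n h * Zsub m n h) ⊆
      ((Λ ⊓ Jsub m n h : Subgroup (SLR n)) : Set (SLR n)) * (Λ ⊓ Zsub m n h : Subgroup (SLR n)) := by
  rw [← hΛ.interDJZ, mul_assoc]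
  exact Set.inter_subset_inter_right _ (Set.subset_mul_right _ one_mem_Dset)

theorem orbitOf_eq_of_inv_mul_mem {n : ℕ} {Λ : Subgroup (SLR n)} (S : Set (SLR n))
    {z z' : SLR n} (hzz' : z'⁻¹ * z ∈ Λ) : orbitOf Λ S z = orbitOf Λ S z' := by
  refine Set.image_congr fun j _ => QuotientGroup.eq.2 ?_
  simpa [mul_assoc] using inv_mem hzz'

theorem IsAdaptedLattice.inv_mul_mem_of_not_disjoint_orbitOf {m n : ℕ} {h : m ≤ n}
    {Λ : Subgroup (SLR n)} (hΛ : IsAdaptedLattice h Λ) {z z' : SLR n}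
    (hz : z ∈ Zsub m n h) (hz' : z' ∈ Zsub m n h)
    (hmeet : ¬ Disjoint (orbitOf Λ (Jsub m n h) z) (orbitOf Λ (Jsub m n h) z')) :
    z'⁻¹ * z ∈ Λ ⊓ Zsub m n h := by
  obtain ⟨_, ⟨j, hj, rfl⟩, j', hj', hjj'⟩ := Set.not_disjoint_iff.1 hmeet
  exact Subgroup.mem_inf.2 ⟨inv_mul_mem_of_mk_mul_eq_mk_mul (commute_of_mem_Jsub_of_mem_Zsub h)
    (disjoint_Jsub_Zsub h) hΛ.inter_mul_subset hj hj' hz hz' hjj'.symm,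
    mul_mem (inv_mem hz') hz⟩

theorem orbits_eq_iff_disjoint_general (m n : ℕ) (hmn : m < n)
    (Λ : Subgroup (SLR n)) (hΛ : IsAdaptedLattice hmn.le Λ) :
    (∀ z z' : SLR n, z ∈ Zsub m n hmn.le → z' ∈ Zsub m n hmn.le →
      ((orbitOf Λ (Jsub m n hmn.le) z = orbitOf Λ (Jsub m n hmn.le) z' ↔
          z'⁻¹ * z ∈ Λ ⊓ Zsub m n hmn.le) ∧
        (z'⁻¹ * z ∉ Λ ⊓ Zsub m n hmn.le →
          Disjoint (orbitOf Λ (Jsub m n hmn.le) z) (orbitOf Λ (Jsub m n hmn.le) z')))) ∧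
    (∀ z : SLR n, z ∈ Zsub m n hmn.le → z ∉ Λ →
      Disjoint (orbitOf Λ (Jsub m n hmn.le) z) (orbitOf Λ (Jsub m n hmn.le) 1)) := by
  have hJ : (Jsub m n hmn.le : Set (SLR n)).Nonempty := ⟨1, one_mem _⟩
  refine ⟨fun z z' hz hz' => ⟨⟨fun heq => ?_, fun hzz' => orbitOf_eq_of_inv_mul_mem _ hzz'.1⟩,
    Not.imp_symm (hΛ.inv_mul_mem_of_not_disjoint_orbitOf hz hz')⟩,
    fun z hz hzΛ => Not.imp_symm (fun hmeet => ?_) hzΛ⟩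
  · refine hΛ.inv_mul_mem_of_not_disjoint_orbitOf hz hz' fun hdisj => ?_
    rw [heq, disjoint_self, Set.bot_eq_empty] at hdisj
    exact (hJ.image _).ne_empty hdisj
  · simpa using (hΛ.inv_mul_mem_of_not_disjoint_orbitOf hz (one_mem _) hmeet).1

/-- for an adapted cocompact lattice, the `J`-orbits of `[z]` and `[z']`
(`z, z' ∈ Z`) coincide iff `z'⁻¹z ∈ Λ∩Z` and are disjoint otherwise; in particular for
`z ∈ Z` with `z ∉ Λ` the orbit `J•[z]` is disjoint from `J•[e]`. -/
theorem orbits_eq_iff_disjoint (m n : ℕ) (hm : 1 ≤ m) (hmn : m < n)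
    (Λ : Subgroup (SLR n)) (hΛ : IsAdaptedLattice hmn.le Λ) :
    (∀ z z' : SLR n, z ∈ Zsub m n hmn.le → z' ∈ Zsub m n hmn.le →
      ((orbitOf Λ (Jsub m n hmn.le) z = orbitOf Λ (Jsub m n hmn.le) z' ↔
          z'⁻¹ * z ∈ Λ ⊓ Zsub m n hmn.le) ∧
        (z'⁻¹ * z ∉ Λ ⊓ Zsub m n hmn.le →
          Disjoint (orbitOf Λ (Jsub m n hmn.le) z) (orbitOf Λ (Jsub m n hmn.le) z')))) ∧
    (∀ z : SLR n, z ∈ Zsub m n hmn.le → z ∉ Λ →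
      Disjoint (orbitOf Λ (Jsub m n hmn.le) z) (orbitOf Λ (Jsub m n hmn.le) 1)) :=
  orbits_eq_iff_disjoint_general m n hmn Λ hΛ
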